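/- In the amalgam setup with M of rank 4, let X ∈ 𝓛(M₁,M₂) with r(X ∩ T) ≥ 2. Then ξ(X) = η(X). -/

import Mathlib

/-!
Among the supersets `Y` of `X`, the value `η(Y)` can only drop below `η(X)` through the
term `-r(Y ∩ T)`. If `Y` agrees with `X` on `E₁`, then it also agrees with `X` on `T ⊆ E₁`,
and `η(Y) - η(X) = r₂(Y ∩ E₂) - r₂(X ∩ E₂) ≥ 0`; symmetrically on `E₂`. Otherwise `Y` strictly
enlarges both flats `X ∩ E₁` and `X ∩ E₂`, gaining at least `1 + 1` in `r₁ + r₂`, while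
`r(Y ∩ T) - r(X ∩ T) ≤ 4 - 2`. So `X` itself attains the infimum defining `ξ(X)`.
-/

open Set

namespace StickyKantor

variable {α : Type*}

/-- The rank of a set in a matroid, as an integer (junk value `0` when infinite). -/
noncomputable def rk (M : Matroid α) (X : Set α) : ℤ :=
  ((⨆ I ∈ {I : Set α | M.Indep I ∧ I ⊆ X}, I.encard).toNat : ℤ)

/-- The modular defect of a pair of sets. -/
noncomputable def mdefect (M : Matroid α) (X Y : Set α) : ℤ :=
  rk M X + rk M Y - rk M (X ∪ Y) - rk M (X ∩ Y)

/-- A modular pair of sets. -/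
def ModularPair (M : Matroid α) (X Y : Set α) : Prop :=
  rk M X + rk M Y = rk M (X ∪ Y) + rk M (X ∩ Y)

/-- `M'` is an extension of `M`: it has a larger ground set and restricts to `M`. -/
def IsExtension (M' M : Matroid α) : Prop :=
  M.E ⊆ M'.E ∧ M = M'.restrict M.E

/-- A point: a rank-1 flat. -/
def IsPoint (M : Matroid α) (p : Set α) : Prop := M.IsFlat p ∧ rk M p = 1

/-- A line: a rank-2 flat. -/
def IsLine (M : Matroid α) (l : Set α) : Prop := M.IsFlat l ∧ rk M l = 2

/-- A plane: a rank-3 flat. -/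
def IsPlane (M : Matroid α) (e : Set α) : Prop := M.IsFlat e ∧ rk M e = 3

/-- Two lines are coplanar if their join has rank at most 3. -/
def Coplanar (M : Matroid α) (l₁ l₂ : Set α) : Prop := rk M (l₁ ∪ l₂) ≤ 3

/-- A hyperplane: a maximal proper flat. -/
def IsHyperplane (M : Matroid α) (H : Set α) : Prop :=
  M.IsFlat H ∧ H ≠ M.E ∧ ∀ F, M.IsFlat F → H ⊂ F → F = M.E

/-- A matroid is hypermodular if every pair of hyperplanes is a modular pair. -/
def Hypermodular (M : Matroid α) : Prop :=
  ∀ H₁ H₂, IsHyperplane M H₁ → IsHyperplane M H₂ → ModularPair M H₁ H₂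

/-- A matroid is modular if every pair of flats is a modular pair. -/
def Modular (M : Matroid α) : Prop :=
  ∀ F₁ F₂, M.IsFlat F₁ → M.IsFlat F₂ → ModularPair M F₁ F₂

/-- A modular cut: an up-closed family of flats closed under intersections of
modular pairs. -/
def IsModularCut (M : Matroid α) (𝓜 : Set (Set α)) : Prop :=
  (∀ F ∈ 𝓜, M.IsFlat F) ∧
  (∀ F ∈ 𝓜, ∀ F', M.IsFlat F' → F ⊆ F' → F' ∈ 𝓜) ∧
  (∀ F₁ ∈ 𝓜, ∀ F₂ ∈ 𝓜, ModularPair M F₁ F₂ → F₁ ∩ F₂ ∈ 𝓜)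

/-- The principal modular cut of a flat `F`. -/
def principalCut (M : Matroid α) (F : Set α) : Set (Set α) :=
  {G | M.IsFlat G ∧ F ⊆ G}

/-- The modular cut generated by a family of flats. -/
def genCut (M : Matroid α) (A : Set (Set α)) : Set (Set α) :=
  ⋂₀ {𝓜 | IsModularCut M 𝓜 ∧ A ⊆ 𝓜}

/-- A non-modular pair of flats is intersectable if the modular cut it generates is
not the principal modular cut of its intersection. -/
def Intersectable (M : Matroid α) (X Y : Set α) : Prop :=
  genCut M {X, Y} ≠ principalCut M (X ∩ Y)

/-- A matroid is OTE (only trivially extendable) if every nonempty modular cut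
is principal. -/
def OTE (M : Matroid α) : Prop :=
  ∀ 𝓜, IsModularCut M 𝓜 → 𝓜 ≠ ∅ → ∃ F, M.IsFlat F ∧ 𝓜 = principalCut M F

/-- A matroid is sticky if every pair of extensions meeting exactly in its ground set
has an amalgam. -/
def Sticky (M : Matroid α) : Prop :=
  ∀ N₁ N₂ : Matroid α, IsExtension N₁ M → IsExtension N₂ M → N₁.E ∩ N₂.E = M.E →
    ∃ A : Matroid α, A.E = N₁.E ∪ N₂.E ∧ IsExtension A N₁ ∧ IsExtension A N₂

/-- The function `η` of the amalgam construction. -/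
noncomputable def eta (M M₁ M₂ : Matroid α) (X : Set α) : ℤ :=
  rk M₁ (X ∩ M₁.E) + rk M₂ (X ∩ M₂.E) - rk M (X ∩ M.E)

/-- The function `ξ` of the amalgam construction. -/
noncomputable def xi (M M₁ M₂ : Matroid α) (X : Set α) : ℤ :=
  sInf {n : ℤ | ∃ Y, X ⊆ Y ∧ Y ⊆ M₁.E ∪ M₂.E ∧ n = eta M M₁ M₂ Y}

/-- The lattice `𝓛(M₁,M₂)` of sets whose traces on both ground sets are flats. -/
def latticeL (M₁ M₂ : Matroid α) : Set (Set α) :=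
  {X | X ⊆ M₁.E ∪ M₂.E ∧ M₁.IsFlat (X ∩ M₁.E) ∧ M₂.IsFlat (X ∩ M₂.E)}

section Rank

variable {M : Matroid α} {X Y F : Set α}

lemma rk_eq_toNat_eRk (M : Matroid α) (X : Set α) : rk M X = ((M.eRk X).toNat : ℤ) := by
  obtain ⟨I, hI⟩ := M.exists_isBasis' X
  suffices h : (⨆ J ∈ {J : Set α | M.Indep J ∧ J ⊆ X}, J.encard) = M.eRk X by rw [rk, h]
  refine le_antisymm (iSup₂_le fun J hJ => hJ.1.encard_le_eRk_of_subset hJ.2) ?_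
  rw [← hI.encard_eq_eRk]
  exact le_iSup₂ (f := fun (J : Set α) (_ : J ∈ {J : Set α | M.Indep J ∧ J ⊆ X}) => J.encard)
    I ⟨hI.indep, hI.subset⟩

lemma rk_le_rk_iff [M.RankFinite] : rk M X ≤ rk M Y ↔ M.eRk X ≤ M.eRk Y := by
  rw [rk_eq_toNat_eRk, rk_eq_toNat_eRk, Nat.cast_le,
    ← ENat.natCast_le_natCast, ENat.natCast_toNat (M.isRkFinite_set X).eRk_lt_top.ne,
    ENat.natCast_toNat (M.isRkFinite_set Y).eRk_lt_top.ne]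

lemma rk_mono (M : Matroid α) [M.RankFinite] (h : X ⊆ Y) : rk M X ≤ rk M Y :=
  rk_le_rk_iff.2 (M.eRk_mono h)

lemma rk_lt_rk_of_isFlat_of_ssubset [M.RankFinite] (hF : M.IsFlat F) (hFY : F ⊂ Y)
    (hY : Y ⊆ M.E) : rk M F < rk M Y := by
  by_contra! hle
  have hcl : M.closure F = M.closure Y :=
    (M.isRkFinite_set F).closure_eq_closure_of_subset_of_eRk_ge_eRk hFY.subset
      (rk_le_rk_iff.1 hle)
  exact hFY.not_subset (hF.closure ▸ hcl ▸ M.subset_closure Y hY)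

end Rank

section Amalgam

variable {M M₁ M₂ : Matroid α} {X Y : Set α}

lemma eta_comm : eta M M₁ M₂ X = eta M M₂ M₁ X := by
  unfold eta
  ring

lemma inter_eq_of_inter_eq_of_subset {E T : Set α} (hT : T ⊆ E) (h : Y ∩ E = X ∩ E) :
    Y ∩ T = X ∩ T := by
  rw [← inter_eq_self_of_subset_right hT, ← inter_assoc, h, inter_assoc]

lemma eta_le_eta_of_inter_eq_left [M₂.RankFinite] (hT : M.E ⊆ M₁.E) (hXY : X ⊆ Y)
    (h₁ : Y ∩ M₁.E = X ∩ M₁.E) : eta M M₁ M₂ X ≤ eta M M₁ M₂ Y := by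
  have h₂ := rk_mono M₂ (inter_subset_inter_left M₂.E hXY)
  simp only [eta, h₁, inter_eq_of_inter_eq_of_subset hT h₁]
  linarith

lemma eta_le_eta_of_inter_eq_right [M₁.RankFinite] (hT : M.E ⊆ M₂.E) (hXY : X ⊆ Y)
    (h₂ : Y ∩ M₂.E = X ∩ M₂.E) : eta M M₁ M₂ X ≤ eta M M₁ M₂ Y := by
  rw [eta_comm, eta_comm (X := Y)]
  exact eta_le_eta_of_inter_eq_left hT hXY h₂

lemma eta_le_eta_of_subset [M₁.RankFinite] [M₂.RankFinite] (hT₁ : M.E ⊆ M₁.E)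
    (hT₂ : M.E ⊆ M₂.E) (hX₁ : M₁.IsFlat (X ∩ M₁.E)) (hX₂ : M₂.IsFlat (X ∩ M₂.E))
    (hXY : X ⊆ Y) (hr : rk M (Y ∩ M.E) ≤ rk M (X ∩ M.E) + 2) :
    eta M M₁ M₂ X ≤ eta M M₁ M₂ Y := by
  have hsub₁ : X ∩ M₁.E ⊆ Y ∩ M₁.E := inter_subset_inter_left _ hXY
  have hsub₂ : X ∩ M₂.E ⊆ Y ∩ M₂.E := inter_subset_inter_left _ hXY
  by_cases h₁ : Y ∩ M₁.E = X ∩ M₁.E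
  · exact eta_le_eta_of_inter_eq_left hT₁ hXY h₁
  by_cases h₂ : Y ∩ M₂.E = X ∩ M₂.E
  · exact eta_le_eta_of_inter_eq_right hT₂ hXY h₂
  have hlt₁ := rk_lt_rk_of_isFlat_of_ssubset hX₁ (hsub₁.ssubset_of_ne (Ne.symm h₁))
    inter_subset_right
  have hlt₂ := rk_lt_rk_of_isFlat_of_ssubset hX₂ (hsub₂.ssubset_of_ne (Ne.symm h₂))
    inter_subset_right
  simp only [eta]
  linarith

lemma xi_eq_eta_of_forall_eta_le (hX : X ⊆ M₁.E ∪ M₂.E)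
    (h : ∀ Y, X ⊆ Y → Y ⊆ M₁.E ∪ M₂.E → eta M M₁ M₂ X ≤ eta M M₁ M₂ Y) :
    xi M M₁ M₂ X = eta M M₁ M₂ X := by
  refine IsLeast.csInf_eq ⟨⟨X, Subset.rfl, hX, rfl⟩, ?_⟩
  rintro n ⟨Y, hXY, hY, rfl⟩
  exact h Y hXY hY

end Amalgam

theorem xi_eq_eta_general (M M₁ M₂ : Matroid α)
    [M.RankFinite] [M₁.RankFinite] [M₂.RankFinite]
    (hT : M₁.E ∩ M₂.E = M.E) (hrank : rk M M.E = 4)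
    (X : Set α) (hX : X ∈ latticeL M₁ M₂) (hXT : 2 ≤ rk M (X ∩ M.E)) :
    xi M M₁ M₂ X = eta M M₁ M₂ X := by
  obtain ⟨hXE, hX₁, hX₂⟩ := hX
  refine xi_eq_eta_of_forall_eta_le hXE fun Y hXY _ => ?_
  have hYT : rk M (Y ∩ M.E) ≤ 4 := hrank ▸ rk_mono M inter_subset_right
  exact eta_le_eta_of_subset (hT ▸ inter_subset_left) (hT ▸ inter_subset_right) hX₁ hX₂ hXY
    (by linarith)

/-- in the amalgam setup over a rank-4 matroid, `ξ = η` on members of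
`𝓛(M₁,M₂)` whose trace on `T` has rank at least 2. -/
theorem xi_eq_eta (M M₁ M₂ : Matroid α)
    [M.RankFinite] [M₁.RankFinite] [M₂.RankFinite]
    (hext₁ : IsExtension M₁ M) (hext₂ : IsExtension M₂ M)
    (hT : M₁.E ∩ M₂.E = M.E) (hrank : rk M M.E = 4)
    (X : Set α) (hX : X ∈ latticeL M₁ M₂) (hXT : 2 ≤ rk M (X ∩ M.E)) :
    xi M M₁ M₂ X = eta M M₁ M₂ X :=
  xi_eq_eta_general M M₁ M₂ hT hrank X hX hXT
end StickyKantor
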